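/- Let n ≥ 3, p > n, and α = 1 − n/p. There exists a constant c > 0, depending only on n and p, such that for every g ∈ L^p_α(ℝ^n) and every t > 0: t^{1/2} · sup_{x ∈ ℝ^n} |(H(t,·) ∗ g)(x)| ≤ c ‖g‖_{α,p}. -/

import Mathlib

open MeasureTheory ENNReal

/-- The Gaussian heat kernel `H(t,x) = (4πt)^{-n/2} exp(-|x|²/(4t))` on `ℝ^n`. -/
noncomputable def heatK (n : ℕ) (t : ℝ) (x : EuclideanSpace ℝ (Fin n)) : ℝ :=
  (4 * Real.pi * t) ^ (-(n : ℝ) / 2) * Real.exp (-‖x‖ ^ 2 / (4 * t))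

/-- The weighted `L^p_α` norm `(∫ |g x|^p ‖x‖^(αp) dx)^(1/p)` on `ℝ^n`. -/
noncomputable def wNorm (n : ℕ) (p α : ℝ) (g : EuclideanSpace ℝ (Fin n) → ℝ) : ℝ :=
  (∫ x, |g x| ^ p * ‖x‖ ^ (α * p)) ^ (1 / p)

open Metric Set

local notation "E" n => EuclideanSpace ℝ (Fin n)


lemma gauss_integrable (n : ℕ) {b : ℝ} (hb : 0 < b) :
    Integrable (fun v : E n => Real.exp (-b * ‖v‖ ^ 2)) := by
  have h := (GaussianFourier.integrable_cexp_neg_mul_sq_norm_add (V := E n)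
      (b := (b : ℂ)) (by simpa using hb) 0 0).norm
  refine h.congr (Filter.Eventually.of_forall fun v => ?_)
  simp [Complex.norm_exp, ← Complex.ofReal_pow]

lemma gauss_lintegral (n : ℕ) {b : ℝ} (hb : 0 < b) :
    ∫⁻ v : E n, ENNReal.ofReal (Real.exp (-b * ‖v‖ ^ 2)) =
      ENNReal.ofReal ((Real.pi / b) ^ ((n : ℝ) / 2)) := by
  rw [← ofReal_integral_eq_lintegral_ofReal (gauss_integrable n hb)
    (Filter.Eventually.of_forall fun v => (Real.exp_pos _).le)]
  congr 1
  simpa [finrank_euclideanSpace_fin] using GaussianFourier.integral_rexp_neg_mul_sq_norm (V := E n) hb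

lemma ball_lintegral_scale (n : ℕ) (β : ℝ) {R : ℝ} (hR : 0 < R) :
    ∫⁻ y in closedBall (0 : E n) R, ENNReal.ofReal (‖y‖ ^ (-β)) =
      ENNReal.ofReal (R ^ ((n : ℝ) - β)) *
        ∫⁻ y in closedBall (0 : E n) 1, ENNReal.ofReal (‖y‖ ^ (-β)) := by
  set f : (E n) → ℝ≥0∞ :=
    (closedBall (0 : E n) R).indicator (fun y => ENNReal.ofReal (‖y‖ ^ (-β))) with hf
  have hmeas : Measurable f := by
    apply Measurable.indicator
    · exact (measurable_norm.pow_const _).ennreal_ofReal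
    · exact measurableSet_closedBall
  have hmap : Measure.map (R • ·) (volume : Measure (E n)) =
      ENNReal.ofReal |(R ^ Module.finrank ℝ (E n))⁻¹| • volume :=
    Measure.map_addHaar_smul volume hR.ne'
  have h1 : ∫⁻ u, f (R • u) = ENNReal.ofReal |(R ^ Module.finrank ℝ (E n))⁻¹| * ∫⁻ y, f y := by
    rw [← lintegral_map hmeas (measurable_const_smul R), hmap, lintegral_smul_measure, smul_eq_mul]
  have h2 : ∀ u : E n, f (R • u) =
      (closedBall (0 : E n) 1).indicator
        (fun u => ENNReal.ofReal (R ^ (-β)) * ENNReal.ofReal (‖u‖ ^ (-β))) u := by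
    intro u
    have hnorm : ‖R • u‖ = R * ‖u‖ := by
      rw [norm_smul, Real.norm_eq_abs, abs_of_pos hR]
    by_cases hu : u ∈ closedBall (0 : E n) 1
    · have hmem : R • u ∈ closedBall (0 : E n) R := by
        rw [mem_closedBall_zero_iff] at hu ⊢
        rw [hnorm]
        calc R * ‖u‖ ≤ R * 1 := by gcongr
        _ = R := mul_one R
      rw [hf, indicator_of_mem hmem, indicator_of_mem hu, hnorm,
        Real.mul_rpow hR.le (norm_nonneg u), ENNReal.ofReal_mul (Real.rpow_nonneg hR.le _)]
    · have hmem : R • u ∉ closedBall (0 : E n) R := by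
        rw [mem_closedBall_zero_iff] at hu ⊢
        rw [hnorm]
        intro hc
        exact hu (by nlinarith)
      rw [hf, indicator_of_notMem hmem, indicator_of_notMem hu]
  have h3 : ∫⁻ u, f (R • u) = ENNReal.ofReal (R ^ (-β)) *
      ∫⁻ y in closedBall (0 : E n) 1, ENNReal.ofReal (‖y‖ ^ (-β)) := by
    simp_rw [h2]
    rw [lintegral_indicator measurableSet_closedBall, lintegral_const_mul]
    exact (measurable_norm.pow_const _).ennreal_ofReal
  have hRn : (0:ℝ) < R ^ Module.finrank ℝ (E n) := pow_pos hR _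
  have hcancel : ENNReal.ofReal (R ^ Module.finrank ℝ (E n)) *
      ENNReal.ofReal |(R ^ Module.finrank ℝ (E n))⁻¹| = 1 := by
    rw [abs_of_pos (inv_pos.mpr hRn), ← ENNReal.ofReal_mul hRn.le,
      mul_inv_cancel₀ hRn.ne', ENNReal.ofReal_one]
  have h4 : ∫⁻ y in closedBall (0 : E n) R, ENNReal.ofReal (‖y‖ ^ (-β)) = ∫⁻ y, f y := by
    rw [hf, lintegral_indicator measurableSet_closedBall]
  rw [h4]
  have h5 : ∫⁻ y, f y = ENNReal.ofReal (R ^ Module.finrank ℝ (E n)) * ∫⁻ u, f (R • u) := by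
    rw [h1, ← mul_assoc, hcancel, one_mul]
  rw [h5, h3, ← mul_assoc, ← ENNReal.ofReal_mul hRn.le]
  congr 3
  rw [finrank_euclideanSpace_fin, ← Real.rpow_natCast R n, ← Real.rpow_add hR]
  ring_nf

lemma ball_lintegral_finite (n : ℕ) {β : ℝ} (hβ0 : 0 < β) (hβn : β < n) :
    ∫⁻ y in closedBall (0 : E n) 1, ENNReal.ofReal (‖y‖ ^ (-β)) < ∞ := by
  have hmeas : Measurable fun y : E n => ‖y‖ ^ (-β) :=
    measurable_norm.pow_const _
  rw [lintegral_eq_lintegral_meas_le _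
    (Filter.Eventually.of_forall fun y => Real.rpow_nonneg (norm_nonneg y) _)
    hmeas.aemeasurable]
  set μ := (volume : Measure (E n)).restrict (closedBall (0 : E n) 1) with hμ
  have key : ∀ t : ℝ, 1 < t → μ {a : E n | t ≤ ‖a‖ ^ (-β)} ≤
      ENNReal.ofReal (t ^ (-((n : ℝ) / β))) * volume (ball (0 : E n) 1) := by
    intro t ht
    have ht0 : (0:ℝ) < t := lt_trans one_pos ht
    have hsub : {a : E n | t ≤ ‖a‖ ^ (-β)} ⊆ closedBall 0 (t ^ (-β)⁻¹) := by
      intro a ha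
      simp only [mem_setOf_eq] at ha
      rcases eq_or_ne a 0 with rfl | h0
      · exfalso
        rw [norm_zero, Real.zero_rpow (by linarith : -β ≠ 0)] at ha
        linarith
      · have hna : 0 < ‖a‖ := norm_pos_iff.mpr h0
        rw [mem_closedBall_zero_iff]
        exact (Real.le_rpow_inv_iff_of_neg hna ht0 (by linarith)).mpr ha
    calc μ {a : E n | t ≤ ‖a‖ ^ (-β)} ≤ volume (closedBall (0 : E n) (t ^ (-β)⁻¹)) :=
          le_trans (le_trans (measure_mono hsub) (Measure.restrict_le_self _))
            le_rfl
      _ = ENNReal.ofReal ((t ^ (-β)⁻¹) ^ Module.finrank ℝ (E n)) * volume (ball (0 : E n) 1) :=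
          Measure.addHaar_closedBall volume 0 (Real.rpow_nonneg ht0.le _)
      _ = ENNReal.ofReal (t ^ (-((n : ℝ) / β))) * volume (ball (0 : E n) 1) := by
          congr 2
          rw [finrank_euclideanSpace_fin, ← Real.rpow_natCast (t ^ (-β)⁻¹) n,
            ← Real.rpow_mul ht0.le]
          rw [inv_neg, neg_mul, inv_mul_eq_div]
  calc ∫⁻ t in Ioi (0:ℝ), μ {a : E n | t ≤ ‖a‖ ^ (-β)}
      ≤ ∫⁻ t in Ioc (0:ℝ) 1 ∪ Ioi 1, μ {a : E n | t ≤ ‖a‖ ^ (-β)} :=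
        lintegral_mono_set Ioi_subset_Ioc_union_Ioi
    _ ≤ (∫⁻ t in Ioc (0:ℝ) 1, μ {a : E n | t ≤ ‖a‖ ^ (-β)}) +
        ∫⁻ t in Ioi (1:ℝ), μ {a : E n | t ≤ ‖a‖ ^ (-β)} := lintegral_union_le _ _ _
    _ < ∞ := by
        refine ENNReal.add_lt_top.2 ⟨?_, ?_⟩
        · calc (∫⁻ t in Ioc (0:ℝ) 1, μ {a : E n | t ≤ ‖a‖ ^ (-β)})
              ≤ ∫⁻ _ in Ioc (0:ℝ) 1, volume (closedBall (0 : E n) 1) := by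
                refine setLIntegral_mono' measurableSet_Ioc fun t _ => ?_
                exact le_trans (measure_mono (subset_univ _)) (by simp [hμ])
            _ = volume (closedBall (0 : E n) 1) * volume (Ioc (0:ℝ) 1) :=
                setLIntegral_const _ _
            _ < ∞ := ENNReal.mul_lt_top measure_closedBall_lt_top (by simp)
        · calc (∫⁻ t in Ioi (1:ℝ), μ {a : E n | t ≤ ‖a‖ ^ (-β)})
              ≤ ∫⁻ t in Ioi (1:ℝ),
                  ENNReal.ofReal (t ^ (-((n : ℝ) / β))) * volume (ball (0 : E n) 1) :=
                setLIntegral_mono' measurableSet_Ioi fun t ht => key t ht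
            _ = (∫⁻ t in Ioi (1:ℝ), ENNReal.ofReal (t ^ (-((n : ℝ) / β)))) *
                  volume (ball (0 : E n) 1) :=
                lintegral_mul_const' _ _ measure_ball_lt_top.ne
            _ < ∞ := by
                refine ENNReal.mul_lt_top ?_ measure_ball_lt_top
                refine IntegrableOn.setLIntegral_lt_top ?_
                refine integrableOn_Ioi_rpow_of_lt ?_ one_pos
                rw [neg_lt_neg_iff]
                exact (one_lt_div hβ0).mpr hβn

noncomputable def I1 (n : ℕ) (β : ℝ) : ℝ≥0∞ :=
  ∫⁻ y in closedBall (0 : E n) 1, ENNReal.ofReal (‖y‖ ^ (-β))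

noncomputable def Ck (n : ℕ) (q β : ℝ) : ℝ :=
  (4 * Real.pi) ^ (-(n : ℝ) * q / 2) * ((I1 n β).toReal + (4 * Real.pi / q) ^ ((n : ℝ) / 2))

lemma Ck_pos (n : ℕ) {q β : ℝ} (hq : 0 < q) : 0 < Ck n q β := by
  have h1 : (0:ℝ) < (4 * Real.pi) ^ (-(n : ℝ) * q / 2) :=
    Real.rpow_pos_of_pos (by positivity) _
  have h2 : (0:ℝ) < (4 * Real.pi / q) ^ ((n : ℝ) / 2) :=
    Real.rpow_pos_of_pos (by positivity) _
  have h3 : 0 ≤ (I1 n β).toReal := ENNReal.toReal_nonneg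
  unfold Ck; nlinarith

lemma kernel_est (n : ℕ) {q β : ℝ} (hq : 1 < q) (hβ0 : 0 < β) (hβn : β < n)
    (hexp : -(n : ℝ) * q / 2 + ((n : ℝ) - β) / 2 = -q / 2)
    {t : ℝ} (ht : 0 < t) (x : EuclideanSpace ℝ (Fin n)) :
    ∫⁻ y : E n, ENNReal.ofReal ((heatK n t (x - y)) ^ q * ‖y‖ ^ (-β)) ≤
      ENNReal.ofReal (Ck n q β * t ^ (-q / 2)) := by
  have hq0 : (0:ℝ) < q := lt_trans one_pos hq
  set R : ℝ := t ^ ((1:ℝ)/2) with hRdef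
  have hR : 0 < R := Real.rpow_pos_of_pos ht _
  have h4t : (0:ℝ) < 4 * Real.pi * t := by positivity
  set c₀ : ℝ := (4 * Real.pi * t) ^ (-(n : ℝ) * q / 2) with hc₀
  have hc₀pos : 0 < c₀ := Real.rpow_pos_of_pos h4t _
  set b : ℝ := q / (4 * t) with hb
  have hbpos : 0 < b := by positivity
  -- pointwise bound
  have hpt : ∀ y : E n, ENNReal.ofReal ((heatK n t (x - y)) ^ q * ‖y‖ ^ (-β)) ≤
      ENNReal.ofReal c₀ *
        ((closedBall (0 : E n) R).indicator (fun y => ENNReal.ofReal (‖y‖ ^ (-β))) y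
          + ENNReal.ofReal (t ^ (-β/2)) * ENNReal.ofReal (Real.exp (-b * ‖x - y‖ ^ 2))) := by
    intro y
    have hkq : (heatK n t (x - y)) ^ q = c₀ * Real.exp (-b * ‖x - y‖ ^ 2) := by
      rw [heatK, Real.mul_rpow (Real.rpow_nonneg h4t.le _) (Real.exp_pos _).le,
        ← Real.rpow_mul h4t.le, ← Real.exp_mul]
      congr 1
      · rw [hc₀]; congr 1; ring
      · congr 1; ring
    rw [hkq]
    set Ey : ℝ := Real.exp (-b * ‖x - y‖ ^ 2) with hEy
    have hEpos : 0 < Ey := Real.exp_pos _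
    have hEle : Ey ≤ 1 := Real.exp_le_one_iff.mpr (by nlinarith [sq_nonneg ‖x - y‖, hbpos])
    have hw : (0:ℝ) ≤ ‖y‖ ^ (-β) := Real.rpow_nonneg (norm_nonneg y) _
    by_cases hy : y ∈ closedBall (0 : E n) R
    · rw [indicator_of_mem hy]
      calc ENNReal.ofReal (c₀ * Ey * (‖y‖ ^ (-β)))
          ≤ ENNReal.ofReal (c₀ * (‖y‖ ^ (-β))) := by
            apply ENNReal.ofReal_le_ofReal
            nlinarith [mul_le_mul_of_nonneg_left hEle (mul_nonneg hc₀pos.le hw)]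
        _ = ENNReal.ofReal c₀ * ENNReal.ofReal (‖y‖ ^ (-β)) := ENNReal.ofReal_mul hc₀pos.le
        _ ≤ _ := by
            gcongr
            exact le_self_add
    · rw [indicator_of_notMem hy, zero_add]
      have hyR : R < ‖y‖ := by
        rw [mem_closedBall_zero_iff] at hy; exact lt_of_not_ge hy
      have hwle : ‖y‖ ^ (-β) ≤ t ^ (-β/2) := by
        have h1 : ‖y‖ ^ (-β) ≤ R ^ (-β) :=
          Real.rpow_le_rpow_of_nonpos hR hyR.le (by linarith)
        have h2 : R ^ (-β) = t ^ (-β/2) := by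
          rw [hRdef, ← Real.rpow_mul ht.le]; congr 1; ring
        linarith
      calc ENNReal.ofReal (c₀ * Ey * (‖y‖ ^ (-β)))
          ≤ ENNReal.ofReal (c₀ * (t ^ (-β/2) * Ey)) := by
            apply ENNReal.ofReal_le_ofReal
            nlinarith [mul_le_mul_of_nonneg_left hwle (mul_nonneg hc₀pos.le hEpos.le)]
        _ = ENNReal.ofReal c₀ * (ENNReal.ofReal (t ^ (-β/2)) * ENNReal.ofReal Ey) := by
            rw [ENNReal.ofReal_mul hc₀pos.le,
              ENNReal.ofReal_mul (Real.rpow_nonneg ht.le _)]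
        _ ≤ _ := le_rfl
  calc ∫⁻ y : E n, ENNReal.ofReal ((heatK n t (x - y)) ^ q * ‖y‖ ^ (-β))
      ≤ ∫⁻ y : E n, ENNReal.ofReal c₀ *
          ((closedBall (0 : E n) R).indicator (fun y => ENNReal.ofReal (‖y‖ ^ (-β))) y
            + ENNReal.ofReal (t ^ (-β/2)) * ENNReal.ofReal (Real.exp (-b * ‖x - y‖ ^ 2))) :=
        lintegral_mono hpt
    _ = ENNReal.ofReal c₀ *
          ((∫⁻ y in closedBall (0 : E n) R, ENNReal.ofReal (‖y‖ ^ (-β)))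
            + ENNReal.ofReal (t ^ (-β/2)) *
              ∫⁻ y : E n, ENNReal.ofReal (Real.exp (-b * ‖x - y‖ ^ 2))) := by
        rw [lintegral_const_mul']
        · congr 1
          rw [lintegral_add_left]
          · rw [lintegral_indicator measurableSet_closedBall, lintegral_const_mul']
            exact ENNReal.ofReal_ne_top
          · exact ((measurable_norm.pow_const _).ennreal_ofReal).indicator
              measurableSet_closedBall
        · exact ENNReal.ofReal_ne_top
    _ ≤ ENNReal.ofReal (Ck n q β * t ^ (-q / 2)) := by
        have hG : ∫⁻ y : E n, ENNReal.ofReal (Real.exp (-b * ‖x - y‖ ^ 2)) =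
            ENNReal.ofReal ((Real.pi / b) ^ ((n : ℝ) / 2)) := by
          have h1 : ∀ y : E n, ENNReal.ofReal (Real.exp (-b * ‖x - y‖ ^ 2)) =
              (fun z : E n => ENNReal.ofReal (Real.exp (-b * ‖z‖ ^ 2))) (y - x) := by
            intro y; simp only [norm_sub_rev x y]
          simp_rw [h1]
          rw [lintegral_sub_right_eq_self (fun z : E n =>
            ENNReal.ofReal (Real.exp (-b * ‖z‖ ^ 2))) x]
          exact gauss_lintegral n hbpos
        have hJ : (∫⁻ y in closedBall (0 : E n) R, ENNReal.ofReal (‖y‖ ^ (-β))) =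
            ENNReal.ofReal (R ^ ((n : ℝ) - β) * (I1 n β).toReal) := by
          rw [ball_lintegral_scale n β hR, ENNReal.ofReal_mul (Real.rpow_nonneg hR.le _)]
          congr 1
          exact (ENNReal.ofReal_toReal
            (ne_of_lt (lt_of_le_of_lt le_rfl (ball_lintegral_finite n hβ0 hβn)))).symm
        rw [hG, hJ, ← ENNReal.ofReal_mul (Real.rpow_nonneg ht.le _),
          ← ENNReal.ofReal_add (by positivity)
            (mul_nonneg (Real.rpow_nonneg ht.le _) (Real.rpow_nonneg (by positivity) _)),
          ← ENNReal.ofReal_mul hc₀pos.le]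
        apply ENNReal.ofReal_le_ofReal
        apply le_of_eq
        set I : ℝ := (I1 n β).toReal with hI
        have e1 : (Real.pi / b) ^ ((n : ℝ) / 2) =
            (4 * Real.pi / q) ^ ((n : ℝ) / 2) * t ^ ((n : ℝ) / 2) := by
          rw [← Real.mul_rpow (by positivity) ht.le]
          congr 1
          rw [hb]
          field_simp
        have e2 : R ^ ((n : ℝ) - β) = t ^ (((n : ℝ) - β) / 2) := by
          rw [hRdef, ← Real.rpow_mul ht.le]
          congr 1; ring
        have e3 : t ^ (-β / 2) * t ^ ((n : ℝ) / 2) = t ^ (((n : ℝ) - β) / 2) := by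
          rw [← Real.rpow_add ht]; congr 1; ring
        have e4 : c₀ = (4 * Real.pi) ^ (-(n : ℝ) * q / 2) * t ^ (-(n : ℝ) * q / 2) := by
          rw [hc₀, Real.mul_rpow (by positivity) ht.le]
        have e5 : t ^ (-(n : ℝ) * q / 2) * t ^ (((n : ℝ) - β) / 2) = t ^ (-q / 2) := by
          rw [← Real.rpow_add ht, hexp]
        calc c₀ * (R ^ ((n : ℝ) - β) * I + t ^ (-β / 2) * (Real.pi / b) ^ ((n : ℝ) / 2))
            = (4 * Real.pi) ^ (-(n : ℝ) * q / 2) * (I + (4 * Real.pi / q) ^ ((n : ℝ) / 2)) *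
              (t ^ (-(n : ℝ) * q / 2) * t ^ (((n : ℝ) - β) / 2)) := by
              rw [e4, e2, e1]
              rw [show t ^ (-β / 2) * ((4 * Real.pi / q) ^ ((n : ℝ) / 2) * t ^ ((n : ℝ) / 2))
                  = (4 * Real.pi / q) ^ ((n : ℝ) / 2) * (t ^ (-β / 2) * t ^ ((n : ℝ) / 2))
                from by ring, e3]
              ring
          _ = Ck n q β * t ^ (-q / 2) := by rw [e5, Ck]

/-- `t^{1/2} ‖H(t)∗g‖_∞ ≤ c ‖g‖_{α,p}` for `g ∈ L^p_α(ℝ^n)`. -/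
theorem stmt4 (n : ℕ) (hn : 3 ≤ n) (p : ℝ) (hp : (n : ℝ) < p)
    (α : ℝ) (hα : α = 1 - n / p) :
    ∃ c > 0, ∀ g : EuclideanSpace ℝ (Fin n) → ℝ, Measurable g →
      Integrable (fun x => |g x| ^ p * ‖x‖ ^ (α * p)) →
      ∀ t > (0 : ℝ), ∀ x : EuclideanSpace ℝ (Fin n),
        t ^ ((1 : ℝ) / 2) * |∫ y, heatK n t (x - y) * g y| ≤ c * wNorm n p α g := by
  have hn3 : (3 : ℝ) ≤ (n : ℝ) := by exact_mod_cast hn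
  have hp1 : 1 < p := by linarith
  have hp0 : (0:ℝ) < p := by linarith
  have hpm1 : (0:ℝ) < p - 1 := by linarith
  set q : ℝ := p / (p - 1) with hqdef
  have hpq : p.HolderConjugate q := (Real.holderConjugate_iff_eq_conjExponent hp1).mpr rfl
  have hq1 : 1 < q := hpq.symm.lt
  have hq0 : (0:ℝ) < q := by linarith
  have hα0 : 0 < α := by
    rw [hα]
    have : (n:ℝ)/p < 1 := (div_lt_one hp0).mpr hp
    linarith
  set β : ℝ := α * q with hβdef
  have hβ0 : 0 < β := mul_pos hα0 hq0
  have hβ1 : β < 1 := by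
    rw [hβdef, hα, hqdef]
    have h1 : (1 - (n:ℝ)/p) * (p / (p-1)) = (p - n) / (p - 1) := by
      field_simp
    rw [h1, div_lt_one hpm1]
    linarith
  have hβn : β < n := by linarith
  have hexp : -(n : ℝ) * q / 2 + ((n : ℝ) - β) / 2 = -q / 2 := by
    rw [hβdef, hα, hqdef]
    field_simp
    ring
  refine ⟨Ck n q β ^ (1/q), Real.rpow_pos_of_pos (Ck_pos n hq0) _, ?_⟩
  intro g hg hint t ht x
  have h4t : (0:ℝ) < 4 * Real.pi * t := by positivity
  have hKpos : ∀ z : E n, 0 < heatK n t z := fun z =>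
    mul_pos (Real.rpow_pos_of_pos h4t _) (Real.exp_pos _)
  have hKcont : Continuous (heatK n t) := by
    unfold heatK
    exact continuous_const.mul ((continuous_norm.pow 2).neg.div_const _).rexp
  set A : (E n) → ℝ≥0∞ := fun y => ENNReal.ofReal (heatK n t (x - y) * ‖y‖ ^ (-α)) with hA
  set B : (E n) → ℝ≥0∞ := fun y => ENNReal.ofReal (|g y| * ‖y‖ ^ α) with hB
  have hAmeas : Measurable A :=
    ((hKcont.comp (continuous_const.sub continuous_id)).measurable.mul
      (measurable_norm.pow_const _)).ennreal_ofReal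
  have hBmeas : Measurable B :=
    (hg.abs.mul (measurable_norm.pow_const _)).ennreal_ofReal
  have hae : ∀ᵐ y : E n, ENNReal.ofReal ‖heatK n t (x - y) * g y‖ = A y * B y := by
    have hne : ∀ᵐ y : E n, y ≠ 0 := by
      haveI : Nontrivial (E n) := ⟨⟨0, EuclideanSpace.single (⟨0, by omega⟩ : Fin n) 1, by
        intro hcon
        have := congrArg (fun v : E n => v ⟨0, by omega⟩) hcon
        simp at this⟩⟩
      refine (ae_iff).mpr ?_
      simpa using measure_singleton (0 : E n)
    filter_upwards [hne] with y hy
    have hny : 0 < ‖y‖ := norm_pos_iff.mpr hy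
    have hone : ‖y‖ ^ (-α) * ‖y‖ ^ α = 1 := by
      rw [← Real.rpow_add hny]; simp
    have : ‖heatK n t (x - y) * g y‖ =
        (heatK n t (x - y) * ‖y‖ ^ (-α)) * (|g y| * ‖y‖ ^ α) := by
      rw [norm_mul, Real.norm_eq_abs, Real.norm_eq_abs,
        abs_of_pos (hKpos (x - y)),
        ← mul_one (heatK n t (x - y) * |g y|), ← hone]
      ring
    rw [this, hA, hB, ENNReal.ofReal_mul
      (mul_nonneg (hKpos (x - y)).le (Real.rpow_nonneg hny.le _))]
  have hW0 : 0 ≤ ∫ x : E n, |g x| ^ p * ‖x‖ ^ (α * p) :=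
    integral_nonneg fun y => mul_nonneg (Real.rpow_nonneg (abs_nonneg _) _)
      (Real.rpow_nonneg (norm_nonneg _) _)
  have hwnorm0 : 0 ≤ wNorm n p α g := Real.rpow_nonneg hW0 _
  -- Hölder
  have hAq : ∫⁻ y : E n, A y ^ q ≤ ENNReal.ofReal (Ck n q β * t ^ (-q / 2)) := by
    have h1 : ∀ y : E n, A y ^ q =
        ENNReal.ofReal ((heatK n t (x - y)) ^ q * ‖y‖ ^ (-β)) := by
      intro y
      rw [hA, ENNReal.ofReal_rpow_of_nonneg
        (mul_nonneg (hKpos (x - y)).le (Real.rpow_nonneg (norm_nonneg _) _)) hq0.le,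
        Real.mul_rpow (hKpos (x - y)).le (Real.rpow_nonneg (norm_nonneg _) _),
        ← Real.rpow_mul (norm_nonneg y),
        show -α * q = -β from by rw [hβdef]; ring]
    simp_rw [h1]
    exact kernel_est n hq1 hβ0 hβn hexp ht x
  have hBp : ∫⁻ y : E n, B y ^ p =
      ENNReal.ofReal (∫ x : E n, |g x| ^ p * ‖x‖ ^ (α * p)) := by
    have h1 : ∀ y : E n, B y ^ p = ENNReal.ofReal (|g y| ^ p * ‖y‖ ^ (α * p)) := by
      intro y
      rw [hB, ENNReal.ofReal_rpow_of_nonneg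
        (mul_nonneg (abs_nonneg _) (Real.rpow_nonneg (norm_nonneg _) _)) hp0.le,
        Real.mul_rpow (abs_nonneg _) (Real.rpow_nonneg (norm_nonneg _) _),
        ← Real.rpow_mul (norm_nonneg y)]
    simp_rw [h1]
    rw [← ofReal_integral_eq_lintegral_ofReal hint]
    exact Filter.Eventually.of_forall fun y =>
      mul_nonneg (Real.rpow_nonneg (abs_nonneg _) _) (Real.rpow_nonneg (norm_nonneg _) _)
  have hHolder : ∫⁻ y : E n, ENNReal.ofReal ‖heatK n t (x - y) * g y‖ ≤
      ENNReal.ofReal (Ck n q β ^ (1/q) * t ^ (-(1:ℝ)/2) * wNorm n p α g) := by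
    calc ∫⁻ y : E n, ENNReal.ofReal ‖heatK n t (x - y) * g y‖
        = ∫⁻ y : E n, A y * B y := lintegral_congr_ae hae
      _ ≤ (∫⁻ y : E n, A y ^ q) ^ (1/q) * (∫⁻ y : E n, B y ^ p) ^ (1/p) :=
          ENNReal.lintegral_mul_le_Lp_mul_Lq volume hpq.symm hAmeas.aemeasurable
            hBmeas.aemeasurable
      _ ≤ (ENNReal.ofReal (Ck n q β * t ^ (-q / 2))) ^ (1/q) *
            (ENNReal.ofReal (∫ x : E n, |g x| ^ p * ‖x‖ ^ (α * p))) ^ (1/p) := by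
          rw [hBp]
          gcongr
      _ = ENNReal.ofReal ((Ck n q β * t ^ (-q / 2)) ^ (1/q)) *
            ENNReal.ofReal ((∫ x : E n, |g x| ^ p * ‖x‖ ^ (α * p)) ^ (1/p)) := by
          rw [ENNReal.ofReal_rpow_of_nonneg
              (mul_nonneg (Ck_pos n hq0).le (Real.rpow_nonneg ht.le _))
              (one_div_nonneg.mpr hq0.le),
            ENNReal.ofReal_rpow_of_nonneg hW0 (one_div_nonneg.mpr hp0.le)]
      _ = ENNReal.ofReal (Ck n q β ^ (1/q) * t ^ (-(1:ℝ)/2) * wNorm n p α g) := by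
          rw [← ENNReal.ofReal_mul (Real.rpow_nonneg
            (mul_nonneg (Ck_pos n hq0).le (Real.rpow_nonneg ht.le _)) _)]
          congr 1
          rw [Real.mul_rpow (Ck_pos n hq0).le (Real.rpow_nonneg ht.le _),
            ← Real.rpow_mul ht.le,
            show -q / 2 * (1/q) = -(1:ℝ)/2 from by field_simp,
            wNorm]
  have habs : |∫ y, heatK n t (x - y) * g y| ≤
      Ck n q β ^ (1/q) * t ^ (-(1:ℝ)/2) * wNorm n p α g := by
    have h1 := norm_integral_le_lintegral_norm (μ := (volume : Measure (E n))) (fun y : E n => heatK n t (x - y) * g y)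
    rw [Real.norm_eq_abs] at h1
    refine le_trans h1 ?_
    refine ENNReal.toReal_le_of_le_ofReal
      (mul_nonneg (mul_nonneg (Real.rpow_nonneg (Ck_pos n hq0).le _)
        (Real.rpow_nonneg ht.le _)) hwnorm0) hHolder
  have ht1 : t ^ ((1:ℝ)/2) * t ^ (-(1:ℝ)/2) = 1 := by
    rw [← Real.rpow_add ht]; norm_num
  calc t ^ ((1:ℝ)/2) * |∫ y, heatK n t (x - y) * g y|
      ≤ t ^ ((1:ℝ)/2) * (Ck n q β ^ (1/q) * t ^ (-(1:ℝ)/2) * wNorm n p α g) := by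
        exact mul_le_mul_of_nonneg_left habs (Real.rpow_nonneg ht.le _)
    _ = Ck n q β ^ (1/q) * wNorm n p α g := by
        rw [show t ^ ((1:ℝ)/2) * (Ck n q β ^ (1/q) * t ^ (-(1:ℝ)/2) * wNorm n p α g)
            = Ck n q β ^ (1/q) * wNorm n p α g * (t ^ ((1:ℝ)/2) * t ^ (-(1:ℝ)/2))
          from by ring, ht1, mul_one]
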